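/- arXiv:2208.06116 — 3 statements merged into one kernel-verified Lean document; each statement's English description precedes it below -/
import Mathlib

section
/- The function f(x2,x3,x4,x5) = (x2·x5 − x3·x4)/(x4² + x5²) · exp(λ·arctan(x4/x5)), defined on {x5 ≠ 0}, is invariant under the rotation-type flow x2(t) = α2·cos t + α3·sin t, x3(t) = −α2·sin t + α3·cos t, x4(t) = (α4·cos t + α5·sin t)·e^{λt}, x5(t) = (−α4·sin t + α5·cos t)·e^{λt}, for all t such that x5(t) ≠ 0 and sufficiently small so that arctan addition applies (more precisely, for t in a neighborhood of 0 on which x5(t) ≠ 0 and |arctan(x4/x5) + t| < π/2). -/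
open Real

/-- The function `f(x2,x3,x4,x5) = (x2 x5 - x3 x4)/(x4²+x5²) · exp(λ arctan(x4/x5))`
is invariant along the rotation-type flow of `G_13^λ`, for `t` close enough to `0`. -/
theorem f_G13_rotation_invariant (lam α2 α3 α4 α5 : ℝ) (h5 : α5 ≠ 0) :
    ∀ t : ℝ,
      (-α4 * sin t + α5 * cos t) * exp (lam * t) ≠ 0 →
      |arctan (α4 / α5) + t| < π / 2 →
      ((α2 * cos t + α3 * sin t) * ((-α4 * sin t + α5 * cos t) * exp (lam * t)) -
            (-α2 * sin t + α3 * cos t) * ((α4 * cos t + α5 * sin t) * exp (lam * t))) /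
          (((α4 * cos t + α5 * sin t) * exp (lam * t)) ^ 2 +
            ((-α4 * sin t + α5 * cos t) * exp (lam * t)) ^ 2) *
          exp (lam * arctan (((α4 * cos t + α5 * sin t) * exp (lam * t)) /
            ((-α4 * sin t + α5 * cos t) * exp (lam * t))))
        = (α2 * α5 - α3 * α4) / (α4 ^ 2 + α5 ^ 2) * exp (lam * arctan (α4 / α5)) := by
  intro t h0 habs
  set θ := arctan (α4 / α5) with hθ
  have hcosθ : cos θ ≠ 0 := ne_of_gt (cos_arctan_pos _)
  have hsinθ : sin θ = α4 / α5 * cos θ := by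
    have := tan_arctan (α4 / α5)
    rw [← hθ, tan_eq_sin_div_cos] at this
    field_simp at this ⊢
    linarith [this]
  have hA : α4 * cos t + α5 * sin t = α5 / cos θ * sin (θ + t) := by
    rw [sin_add, hsinθ]; field_simp
  have hB : -α4 * sin t + α5 * cos t = α5 / cos θ * cos (θ + t) := by
    rw [cos_add, hsinθ]; field_simp; ring
  have hcosu : cos (θ + t) ≠ 0 := by
    have h1 := abs_lt.mp habs
    exact ne_of_gt (cos_pos_of_mem_Ioo ⟨h1.1, h1.2⟩)
  have hden : -α4 * sin t + α5 * cos t ≠ 0 := by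
    intro h; exact h0 (by rw [h]; ring)
  have hratio : ((α4 * cos t + α5 * sin t) * exp (lam * t)) /
      ((-α4 * sin t + α5 * cos t) * exp (lam * t)) = tan (θ + t) := by
    rw [hA, hB, tan_eq_sin_div_cos]
    field_simp
  have harctan : arctan (((α4 * cos t + α5 * sin t) * exp (lam * t)) /
      ((-α4 * sin t + α5 * cos t) * exp (lam * t))) = θ + t := by
    rw [hratio]
    have h1 := abs_lt.mp habs
    exact arctan_tan h1.1 h1.2
  rw [harctan, mul_add, exp_add]
  have hsum : α4 ^ 2 + α5 ^ 2 ≠ 0 := by positivity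
  have hexp : exp (lam * t) ≠ 0 := exp_ne_zero _
  have hnum : (α2 * cos t + α3 * sin t) * ((-α4 * sin t + α5 * cos t) * exp (lam * t)) -
      (-α2 * sin t + α3 * cos t) * ((α4 * cos t + α5 * sin t) * exp (lam * t)) =
      (α2 * α5 - α3 * α4) * exp (lam * t) := by
    have := sin_sq_add_cos_sq t
    linear_combination (α2 * α5 - α3 * α4) * exp (lam * t) * this
  have hden2 : ((α4 * cos t + α5 * sin t) * exp (lam * t)) ^ 2 +
      ((-α4 * sin t + α5 * cos t) * exp (lam * t)) ^ 2 =
      (α4 ^ 2 + α5 ^ 2) * exp (lam * t) ^ 2 := by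
    have := sin_sq_add_cos_sq t
    linear_combination (α4 ^ 2 + α5 ^ 2) * exp (lam * t) ^ 2 * this
  rw [hnum, hden2]
  field_simp
end

section
/- The map h(x1,x2,x3,x4,x5,x,y) = (x1, x2·x5^{λ/(1+λ)}·e^{−λx4/((1+λ)x5)}, x3·x5^{λ/(1+λ)}·e^{−λx4/((1+λ)x5)}, x4, x5, x, y) is a homeomorphism of V = {x5 > 0} ⊂ ℝ^7 onto itself, and it maps the level set {(x2 − x3·x4/x5)·e^{−x4/x5} = c} onto the level set {(x2 − x3·x4/x5)·x5^{−λ/(1+λ)}·e^{−x4/((1+λ)x5)} = c} for every c ∈ ℝ. -/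
open Real

abbrev V2p : Type := {v : Fin 7 → ℝ // 0 < v 4}

noncomputable def hfac (lam : ℝ) (v : Fin 7 → ℝ) : ℝ :=
  (v 4) ^ (lam / (1 + lam)) * Real.exp (-(lam * v 3 / ((1 + lam) * v 4)))

lemma hfac_pos (lam : ℝ) (v : Fin 7 → ℝ) (h : 0 < v 4) : 0 < hfac lam v :=
  mul_pos (Real.rpow_pos_of_pos h _) (Real.exp_pos _)

noncomputable def Fmap (lam : ℝ) (v : Fin 7 → ℝ) : Fin 7 → ℝ :=
  Function.update (Function.update v 1 (v 1 * hfac lam v)) 2 (v 2 * hfac lam v)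

noncomputable def Gmap (lam : ℝ) (v : Fin 7 → ℝ) : Fin 7 → ℝ :=
  Function.update (Function.update v 1 (v 1 * (hfac lam v)⁻¹)) 2 (v 2 * (hfac lam v)⁻¹)

lemma Fmap4 (lam : ℝ) (v : Fin 7 → ℝ) : Fmap lam v 4 = v 4 := by
  simp [Fmap, Function.update]

lemma Gmap4 (lam : ℝ) (v : Fin 7 → ℝ) : Gmap lam v 4 = v 4 := by
  simp [Gmap, Function.update]

lemma hfac_Fmap (lam : ℝ) (v : Fin 7 → ℝ) : hfac lam (Fmap lam v) = hfac lam v := by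
  simp [hfac, Fmap, Function.update]

lemma hfac_Gmap (lam : ℝ) (v : Fin 7 → ℝ) : hfac lam (Gmap lam v) = hfac lam v := by
  simp [hfac, Gmap, Function.update]

lemma cont_hfac (lam : ℝ) (hl : (1:ℝ) + lam ≠ 0) : Continuous fun v : V2p => hfac lam v.1 := by
  have hc4 : Continuous fun v : V2p => v.1 4 := (continuous_apply 4).comp continuous_subtype_val
  have hc3 : Continuous fun v : V2p => v.1 3 := (continuous_apply 3).comp continuous_subtype_val
  rw [continuous_iff_continuousAt]
  intro v
  have hne : (1 + lam) * v.1 4 ≠ 0 := mul_ne_zero hl v.2.ne'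
  have h1 : ContinuousAt (fun v : V2p => (v.1 4) ^ (lam / (1 + lam))) v :=
    hc4.continuousAt.rpow_const (Or.inl v.2.ne')
  have h2 : ContinuousAt (fun v : V2p => -(lam * v.1 3 / ((1 + lam) * v.1 4))) v :=
    ((hc3.continuousAt.const_mul lam).div (hc4.continuousAt.const_mul (1 + lam)) hne).neg
  exact h1.mul (Real.continuous_exp.continuousAt.comp h2)

noncomputable def Hhom (lam : ℝ) (hl : (1:ℝ) + lam ≠ 0) : V2p ≃ₜ V2p where
  toFun v := ⟨Fmap lam v.1, by rw [Fmap4]; exact v.2⟩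
  invFun v := ⟨Gmap lam v.1, by rw [Gmap4]; exact v.2⟩
  left_inv v := by
    have hf := (hfac_pos lam v.1 v.2).ne'
    apply Subtype.ext
    funext j
    simp only [Gmap, hfac_Fmap]
    fin_cases j <;> simp [Fmap, Function.update] <;> field_simp
  right_inv v := by
    have hf := (hfac_pos lam v.1 v.2).ne'
    apply Subtype.ext
    funext j
    simp only [Fmap, hfac_Gmap]
    fin_cases j <;> simp [Gmap, Function.update] <;> field_simp
  continuous_toFun := by
    apply Continuous.subtype_mk
    have h := cont_hfac lam hl
    exact ((continuous_subtype_val.update 1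
      (((continuous_apply 1).comp continuous_subtype_val).mul h)).update 2
      (((continuous_apply 2).comp continuous_subtype_val).mul h))
  continuous_invFun := by
    apply Continuous.subtype_mk
    have h : Continuous fun v : V2p => (hfac lam v.1)⁻¹ :=
      (cont_hfac lam hl).inv₀ fun v => (hfac_pos lam v.1 v.2).ne'
    exact ((continuous_subtype_val.update 1
      (((continuous_apply 1).comp continuous_subtype_val).mul h)).update 2
      (((continuous_apply 2).comp continuous_subtype_val).mul h))

lemma key (lam : ℝ) (hl : (1:ℝ) + lam ≠ 0) (a b t s : ℝ) (hs : 0 < s) :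
    (a * hfac lam ![0,a,b,t,s,0,0] - b * hfac lam ![0,a,b,t,s,0,0] * t / s)
      * s ^ (-(lam / (1 + lam))) * Real.exp (-(t / ((1 + lam) * s)))
      = (a - b * t / s) * Real.exp (-(t / s)) := by
  have hfv : hfac lam ![0,a,b,t,s,0,0]
      = s ^ (lam / (1 + lam)) * Real.exp (-(lam * t / ((1 + lam) * s))) := by
    simp [hfac]
  rw [hfv]
  have h1 : s ^ (lam / (1 + lam)) * s ^ (-(lam / (1 + lam))) = 1 := by
    rw [← Real.rpow_add hs]; norm_num
  have h2 : Real.exp (-(lam * t / ((1 + lam) * s))) * Real.exp (-(t / ((1 + lam) * s)))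
      = Real.exp (-(t / s)) := by
    rw [← Real.exp_add]
    congr 1
    field_simp
    ring
  calc (a * (s ^ (lam / (1 + lam)) * Real.exp (-(lam * t / ((1 + lam) * s))))
        - b * (s ^ (lam / (1 + lam)) * Real.exp (-(lam * t / ((1 + lam) * s)))) * t / s)
        * s ^ (-(lam / (1 + lam))) * Real.exp (-(t / ((1 + lam) * s)))
      = (a - b * t / s) * (s ^ (lam / (1 + lam)) * s ^ (-(lam / (1 + lam))))
        * (Real.exp (-(lam * t / ((1 + lam) * s))) * Real.exp (-(t / ((1 + lam) * s)))) := by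
        ring
    _ = (a - b * t / s) * Real.exp (-(t / s)) := by rw [h1, h2]; ring

/-- The map `h_{7(λ)}` multiplying `x2, x3` by `x5^{λ/(1+λ)} · e^{-λ x4/((1+λ)x5)}`
is a self-homeomorphism of `{x5 > 0} ⊂ ℝ^7` sending each level set
`{(x2 - x3 x4/x5) e^{-x4/x5} = c}` onto the level set
`{(x2 - x3 x4/x5) x5^{-λ/(1+λ)} e^{-x4/((1+λ)x5)} = c}`. -/
theorem h7_homeomorph_levelsets (lam : ℝ) (hlam : lam ≠ -1) :
    ∃ H : V2p ≃ₜ V2p,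
      (∀ v : V2p, (H v).1 =
        Function.update (Function.update v.1 1
          (v.1 1 * (v.1 4) ^ (lam / (1 + lam)) *
            exp (-(lam * v.1 3 / ((1 + lam) * v.1 4))))) 2
          (v.1 2 * (v.1 4) ^ (lam / (1 + lam)) *
            exp (-(lam * v.1 3 / ((1 + lam) * v.1 4))))) ∧
      (∀ c : ℝ,
        (⇑H) '' {v : V2p | (v.1 1 - v.1 2 * v.1 3 / v.1 4) * exp (-(v.1 3 / v.1 4)) = c}
          = {v : V2p |
              (v.1 1 - v.1 2 * v.1 3 / v.1 4) * (v.1 4) ^ (-(lam / (1 + lam))) *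
                exp (-(v.1 3 / ((1 + lam) * v.1 4))) = c}) := by
  have hl : (1:ℝ) + lam ≠ 0 := fun h => hlam (by linarith)
  refine ⟨Hhom lam hl, ?_, ?_⟩
  · intro v
    show Fmap lam v.1 = _
    simp only [Fmap, hfac, mul_assoc]
  · intro c
    have hiff : ∀ v : V2p,
        v ∈ {v : V2p | (v.1 1 - v.1 2 * v.1 3 / v.1 4) * exp (-(v.1 3 / v.1 4)) = c}
        ↔ Hhom lam hl v ∈ {v : V2p |
              (v.1 1 - v.1 2 * v.1 3 / v.1 4) * (v.1 4) ^ (-(lam / (1 + lam))) *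
                exp (-(v.1 3 / ((1 + lam) * v.1 4))) = c} := by
      intro v
      have e1 : (Hhom lam hl v).1 1 = v.1 1 * hfac lam v.1 := by
        show Fmap lam v.1 1 = _; simp [Fmap, Function.update]
      have e2 : (Hhom lam hl v).1 2 = v.1 2 * hfac lam v.1 := by
        show Fmap lam v.1 2 = _; simp [Fmap, Function.update]
      have e3 : (Hhom lam hl v).1 3 = v.1 3 := by
        show Fmap lam v.1 3 = _; simp [Fmap, Function.update]
      have e4 : (Hhom lam hl v).1 4 = v.1 4 := Fmap4 lam v.1
      simp only [Set.mem_setOf_eq, e1, e2, e3, e4]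
      have hfv : hfac lam v.1 = hfac lam ![0, v.1 1, v.1 2, v.1 3, v.1 4, 0, 0] := by
        simp [hfac]
      rw [hfv, key lam hl (v.1 1) (v.1 2) (v.1 3) (v.1 4) v.2]
    have hset : {v : V2p | (v.1 1 - v.1 2 * v.1 3 / v.1 4) * exp (-(v.1 3 / v.1 4)) = c}
        = (Hhom lam hl) ⁻¹' {v : V2p |
              (v.1 1 - v.1 2 * v.1 3 / v.1 4) * (v.1 4) ^ (-(lam / (1 + lam))) *
                exp (-(v.1 3 / ((1 + lam) * v.1 4))) = c} := Set.ext hiff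
    rw [hset, Set.image_preimage_eq _ (Hhom lam hl).surjective]
end

section
/- For λ1+1 ≠ λ2 and the one-parameter transformations T_{x,y,x1}(α2,α3,α4,α5) = (α2·e^y + α4·x1·e^y, α3·e^{λ1x+λ2y} + α5·x1·e^{λ1x+λ2y}, α4·e^{x+y}, α5·e^{(λ1+1)x+λ2y}), the quantity I(α) = (α2 − α3·α4/α5)·α4^{(1+λ1)/(λ2−λ1−1)}·α5^{−1/(λ2−λ1−1)} is invariant: I(T_{x,y,x1}(α)) = I(α) for all x, y, x1 ∈ ℝ and all α with α4 > 0 and α5 > 0. -/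
open Real

/-!
`I` factors as `J · W` with `J = α2 - α3 α4 / α5` and `W = α4^p α5^q`, where
`p = (1 + λ1)/(λ2 - λ1 - 1)` and `q = -1/(λ2 - λ1 - 1)`. The `x1`-terms of `T` cancel in `J`, so `J`
is a relative invariant picking up the factor `e^y`; the exponents `p, q` are chosen so that `W`
picks up `e^{(x+y)p + ((λ1+1)x + λ2 y)q} = e^{-y}`.
-/

namespace G4

noncomputable def relInvariant (α2 α3 α4 α5 : ℝ) : ℝ := α2 - α3 * α4 / α5

noncomputable def weight (lam1 lam2 α4 α5 : ℝ) : ℝ :=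
  α4 ^ ((1 + lam1) / (lam2 - lam1 - 1)) * α5 ^ (-(1 / (lam2 - lam1 - 1)))

theorem relInvariant_transform (lam1 lam2 x y x1 α2 α3 α4 α5 : ℝ) (h5 : α5 ≠ 0) :
    relInvariant (α2 * exp y + α4 * x1 * exp y)
        (α3 * exp (lam1 * x + lam2 * y) + α5 * x1 * exp (lam1 * x + lam2 * y))
        (α4 * exp (x + y)) (α5 * exp ((lam1 + 1) * x + lam2 * y)) =
      exp y * relInvariant α2 α3 α4 α5 := by
  have hexp : exp (lam1 * x + lam2 * y) * exp (x + y) = exp ((lam1 + 1) * x + lam2 * y) * exp y := by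
    rw [← exp_add, ← exp_add]
    ring_nf
  unfold relInvariant
  rw [show (α3 * exp (lam1 * x + lam2 * y) + α5 * x1 * exp (lam1 * x + lam2 * y)) *
      (α4 * exp (x + y)) = (α3 + α5 * x1) * α4 * (exp (lam1 * x + lam2 * y) * exp (x + y)) by ring,
    hexp]
  field_simp
  ring

theorem weight_exponent_eq_neg {lam1 lam2 : ℝ} (h : lam2 ≠ lam1 + 1) (x y : ℝ) :
    (x + y) * ((1 + lam1) / (lam2 - lam1 - 1)) +
      ((lam1 + 1) * x + lam2 * y) * (-(1 / (lam2 - lam1 - 1))) = -y := by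
  have hd : lam2 - lam1 - 1 ≠ 0 := by
    contrapose! h
    linarith
  field_simp
  ring

theorem mul_exp_rpow {a : ℝ} (ha : 0 ≤ a) (u p : ℝ) : (a * exp u) ^ p = a ^ p * exp (u * p) := by
  rw [mul_rpow ha (exp_pos u).le, ← exp_mul]

theorem weight_transform {lam1 lam2 : ℝ} (h : lam2 ≠ lam1 + 1) (x y : ℝ) {α4 α5 : ℝ}
    (h4 : 0 ≤ α4) (h5 : 0 ≤ α5) :
    weight lam1 lam2 (α4 * exp (x + y)) (α5 * exp ((lam1 + 1) * x + lam2 * y)) =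
      exp (-y) * weight lam1 lam2 α4 α5 := by
  rw [weight, mul_exp_rpow h4, mul_exp_rpow h5, ← weight_exponent_eq_neg h x y, exp_add, weight]
  ring

end G4

open G4 in
/-- The invariant `I(α) = (α2 - α3 α4/α5) · α4^{(1+λ1)/(λ2-λ1-1)} · α5^{-1/(λ2-λ1-1)}`
is preserved by the transformations
`T_{x,y,x1}(α2,α3,α4,α5) = (α2 e^y + α4 x1 e^y, α3 e^{λ1x+λ2y} + α5 x1 e^{λ1x+λ2y},
α4 e^{x+y}, α5 e^{(λ1+1)x+λ2y})`. -/
theorem I_G4_invariant (lam1 lam2 : ℝ) (h : lam2 ≠ lam1 + 1) :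
    ∀ x y x1 α2 α3 α4 α5 : ℝ, 0 < α4 → 0 < α5 →
      (α2 * exp y + α4 * x1 * exp y -
          (α3 * exp (lam1 * x + lam2 * y) + α5 * x1 * exp (lam1 * x + lam2 * y)) *
            (α4 * exp (x + y)) / (α5 * exp ((lam1 + 1) * x + lam2 * y))) *
          (α4 * exp (x + y)) ^ ((1 + lam1) / (lam2 - lam1 - 1)) *
          (α5 * exp ((lam1 + 1) * x + lam2 * y)) ^ (-(1 / (lam2 - lam1 - 1)))
        = (α2 - α3 * α4 / α5) * α4 ^ ((1 + lam1) / (lam2 - lam1 - 1)) *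
          α5 ^ (-(1 / (lam2 - lam1 - 1))) := by
  intro x y x1 α2 α3 α4 α5 h4 h5
  have hJ := relInvariant_transform lam1 lam2 x y x1 α2 α3 α4 α5 h5.ne'
  have hW := weight_transform h x y h4.le h5.le
  unfold relInvariant at hJ
  unfold weight at hW
  rw [mul_assoc, hJ, hW, mul_mul_mul_comm, ← exp_add, add_neg_cancel, exp_zero, one_mul, mul_assoc]
end
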